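/- arXiv:math/0212300 — 6 statements merged into one kernel-verified Lean document; each statement's English description precedes it below -/
import Mathlib

section
/- Let d ≥ 2 and Δ_c = (1/d)((d+1)/2)^((d+1)/d). For Δ < Δ_c, the function Φ_Δ(λ) = λ^((d-1)/d) + Δ(1-λ)² on [0,1] has the unique global minimizer λ = 0. -/
lemma amgm_aux (d : ℕ) (hd : 1 ≤ d) (x y : ℝ) (hx : 0 ≤ x) (hy : 0 ≤ y) :
    x ^ d * y ≤ (((d : ℝ) * x + y) / (d + 1)) ^ (d + 1) := by
  have hD : (0:ℝ) < d := by exact_mod_cast hd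
  have hD1 : (0:ℝ) < (d:ℝ) + 1 := by linarith
  set w₁ : ℝ := (d:ℝ) / ((d:ℝ) + 1) with hw₁def
  set w₂ : ℝ := 1 / ((d:ℝ) + 1) with hw₂def
  have hw : w₁ + w₂ = 1 := by rw [hw₁def, hw₂def]; field_simp
  have h := Real.geom_mean_le_arith_mean2_weighted (by positivity) (by positivity) hx hy hw
  have hnn : 0 ≤ x ^ w₁ * y ^ w₂ := by positivity
  have h2 := pow_le_pow_left₀ hnn h (d + 1)
  calc x ^ d * y = (x ^ w₁ * y ^ w₂) ^ (d + 1) := by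
        rw [mul_pow, ← Real.rpow_natCast (x ^ w₁) (d+1), ← Real.rpow_natCast (y ^ w₂) (d+1),
          ← Real.rpow_mul hx, ← Real.rpow_mul hy]
        push_cast
        have e1 : w₁ * ((d:ℝ) + 1) = (d:ℝ) := by rw [hw₁def]; field_simp
        have e2 : w₂ * ((d:ℝ) + 1) = 1 := by rw [hw₂def]; field_simp
        rw [e1, e2, Real.rpow_one, Real.rpow_natCast]
    _ ≤ (w₁ * x + w₂ * y) ^ (d + 1) := h2
    _ = (((d:ℝ) * x + y) / (d + 1)) ^ (d + 1) := by rw [hw₁def, hw₂def]; ring_nf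

/-- For Δ < Δ_c, Φ_Δ has the unique global minimizer λ = 0 on [0,1]. -/
theorem subcritical_unique_minimizer (d : ℕ) (hd : 2 ≤ d) (Δ : ℝ) (hΔ : 0 ≤ Δ)
    (hsub : Δ < (1 / (d:ℝ)) * (((d:ℝ) + 1) / 2) ^ (((d:ℝ) + 1) / d)) :
    ∀ l ∈ Set.Icc (0:ℝ) 1, l ≠ 0 →
      ((0:ℝ) ^ (((d:ℝ) - 1) / d) + Δ * (1 - 0) ^ 2 : ℝ) <
        l ^ (((d:ℝ) - 1) / d) + Δ * (1 - l) ^ 2 := by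
  intro l hl hlne
  obtain ⟨hl0', hl1⟩ := hl
  have hl0 : 0 < l := lt_of_le_of_ne hl0' (Ne.symm hlne)
  have hD : (2:ℝ) ≤ (d:ℝ) := by exact_mod_cast hd
  have hDpos : (0:ℝ) < d := by linarith
  have hexp : ((d:ℝ) - 1) / d ≠ 0 := by
    apply div_ne_zero <;> [linarith; linarith]
  rw [Real.zero_rpow hexp]
  -- abbreviations
  set α : ℝ := ((d:ℝ) - 1) / d with hαdef
  set s : ℝ := l ^ ((1:ℝ) / d) with hsdef
  have hs0 : 0 < s := Real.rpow_pos_of_pos hl0 _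
  have hαpos : 0 < l ^ α := Real.rpow_pos_of_pos hl0 _
  have hls : l ^ α * s = l := by
    rw [hαdef, hsdef, ← Real.rpow_add hl0]
    have : ((d:ℝ) - 1) / d + 1 / d = 1 := by field_simp; ring
    rw [this, Real.rpow_one]
  -- the critical constant
  set c : ℝ := ((d:ℝ) + 1) / 2 with hcdef
  have hc1 : (1:ℝ) ≤ c := by rw [hcdef]; linarith
  have hΔc : (0:ℝ) < 1 / (d:ℝ) * c ^ (((d:ℝ) + 1) / d) := by positivity
  -- main claim : Δ_c * ((2 - l) * s) ≤ 1
  have hclaim : (1 / (d:ℝ) * c ^ (((d:ℝ) + 1) / d)) * ((2 - l) * s) ≤ 1 := by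
    have h2l : (0:ℝ) ≤ 2 - l := by linarith
    have hX : (0:ℝ) ≤ (1 / (d:ℝ) * c ^ (((d:ℝ) + 1) / d)) * ((2 - l) * s) := by positivity
    rw [← pow_le_one_iff_of_nonneg hX (n := d) (by omega)]
    -- compute the d-th power
    have hsd : s ^ d = l := by
      rw [hsdef, ← Real.rpow_natCast (l ^ ((1:ℝ)/d)) d, ← Real.rpow_mul hl0.le]
      rw [one_div, inv_mul_cancel₀ (by positivity : (d:ℝ) ≠ 0), Real.rpow_one]
    have hcd : (c ^ (((d:ℝ) + 1) / d)) ^ d = c ^ (d + 1) := by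
      rw [← Real.rpow_natCast (c ^ (((d:ℝ) + 1) / d)) d, ← Real.rpow_mul (by linarith : (0:ℝ) ≤ c)]
      rw [div_mul_cancel₀ _ (by positivity : (d:ℝ) ≠ 0)]
      rw [show ((d:ℝ) + 1) = ((d + 1 : ℕ) : ℝ) by push_cast; ring, Real.rpow_natCast]
    have hamgm := amgm_aux d (by omega) (2 - l) ((d:ℝ) * l) h2l (by positivity)
    have hsum : (((d:ℝ) * (2 - l) + (d:ℝ) * l) / ((d:ℝ) + 1)) = 2 * (d:ℝ) / ((d:ℝ) + 1) := by
      field_simp; ring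
    rw [hsum] at hamgm
    -- hamgm : (2-l)^d * (d*l) ≤ (2d/(d+1))^(d+1)
    have hkey : c ^ (d + 1) * ((2 - l) ^ d * l) ≤ (d:ℝ) ^ d := by
      have hc0 : (0:ℝ) < c := by linarith
      have h1 : c ^ (d + 1) * ((2 - l) ^ d * ((d:ℝ) * l)) ≤ c ^ (d + 1) * (2 * (d:ℝ) / ((d:ℝ) + 1)) ^ (d + 1) := by
        apply mul_le_mul_of_nonneg_left hamgm (by positivity)
      have h2 : c ^ (d + 1) * (2 * (d:ℝ) / ((d:ℝ) + 1)) ^ (d + 1) = (d:ℝ) ^ (d + 1) := by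
        rw [← mul_pow, hcdef]
        congr 1
        field_simp
      rw [h2] at h1
      have := mul_le_mul_of_nonneg_right h1 (by positivity : (0:ℝ) ≤ ((d:ℝ))⁻¹)
      calc c ^ (d + 1) * ((2 - l) ^ d * l)
          = c ^ (d + 1) * ((2 - l) ^ d * ((d:ℝ) * l)) * ((d:ℝ))⁻¹ := by
            field_simp
        _ ≤ (d:ℝ) ^ (d + 1) * ((d:ℝ))⁻¹ := this
        _ = (d:ℝ) ^ d := by
            rw [pow_succ]; field_simp
    calc (1 / (d:ℝ) * c ^ (((d:ℝ) + 1) / d) * ((2 - l) * s)) ^ d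
        = (1 / (d:ℝ)) ^ d * ((c ^ (((d:ℝ) + 1) / d)) ^ d) * ((2 - l) ^ d * s ^ d) := by
          rw [mul_pow, mul_pow, mul_pow]
      _ = (1 / (d:ℝ)) ^ d * (c ^ (d + 1) * ((2 - l) ^ d * l)) := by rw [hcd, hsd]; ring
      _ ≤ (1 / (d:ℝ)) ^ d * (d:ℝ) ^ d := by
          apply mul_le_mul_of_nonneg_left hkey (by positivity)
      _ = 1 := by rw [← mul_pow]; field_simp; simp
  -- finish
  have h2ls : 0 < (2 - l) * s := by
    have : (0:ℝ) < 2 - l := by linarith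
    positivity
  have hfinal : Δ * (l * (2 - l)) < l ^ α := by
    calc Δ * (l * (2 - l)) = Δ * ((2 - l) * s) * l ^ α := by
          rw [show Δ * ((2 - l) * s) * l ^ α = Δ * ((2 - l) * (l ^ α * s)) from by ring, hls]
          ring
      _ < (1 / (d:ℝ) * c ^ (((d:ℝ) + 1) / d)) * ((2 - l) * s) * l ^ α := by
          apply mul_lt_mul_of_pos_right _ hαpos
          exact mul_lt_mul_of_pos_right hsub h2ls
      _ ≤ 1 * l ^ α := mul_le_mul_of_nonneg_right hclaim hαpos.le
      _ = l ^ α := one_mul _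
  nlinarith [hfinal]
end

section
/- Let d ≥ 2 and Δ_c = (1/d)((d+1)/2)^((d+1)/d). At Δ = Δ_c, the set of global minimizers of Φ_Δ(λ) = λ^((d-1)/d) + Δ(1-λ)² on [0,1] is exactly {0, 2/(d+1)}. -/
open Real

/-- Strict Bernoulli: for `0 ≤ w`, `w ≠ 1`, `2 ≤ n`, we have `1 + n*(w-1) < w^n`. -/
lemma strict_bernoulli {w : ℝ} (hw : 0 ≤ w) (hw1 : w ≠ 1) :
    ∀ n : ℕ, 2 ≤ n → 1 + (n:ℝ) * (w - 1) < w ^ n := by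
  intro n hn
  induction n, hn using Nat.le_induction with
  | base => push_cast; nlinarith [sq_pos_of_ne_zero (sub_ne_zero.mpr hw1)]
  | succ n hn ih =>
      rcases eq_or_lt_of_le hw with h0 | h0
      · rw [← h0]
        push_cast
        have : (2:ℝ) ≤ n := by exact_mod_cast hn
        rw [zero_pow (by omega)]
        nlinarith
      · have h1 : w ^ (n+1) > w * (1 + (n:ℝ) * (w - 1)) := by
          rw [pow_succ, mul_comm]
          exact (mul_lt_mul_iff_right₀ h0).mpr ih
        push_cast
        nlinarith [sq_nonneg (w - 1), Nat.cast_nonneg (α := ℝ) n]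

lemma rpow_root_pow (x : ℝ) (hx : 0 ≤ x) (D : ℝ) (k : ℕ) :
    (x ^ ((1:ℝ)/D)) ^ k = x ^ ((k:ℝ)/D) := by
  rw [← rpow_natCast (x ^ ((1:ℝ)/D)) k, ← rpow_mul hx, div_mul_eq_mul_div, one_mul]

/-- Pure algebra step of the decomposition. -/
lemma alg_decomp (e : ℕ) (D t c w m : ℝ) (hD : 0 < D) (ht : 0 < t)
    (h1 : w ^ (e+2) = t * m) (h2 : m ^ ((D-1)/D) = c * w ^ (e+1) / t) :
    m ^ ((D-1)/D) + ((1/D) * (t*c)) * (1-m)^2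
      = (1/D) * (t*c) + (c/(D*t)) * w ^ (e+1) * (w ^ (e+3) - 2*t*w + D) := by
  have hm : m = w ^ (e+2) / t := by
    rw [h1, mul_comm, mul_div_assoc, div_self ht.ne', mul_one]
  rw [h2, hm]
  field_simp
  ring

/-- Main decomposition: for `m > 0`, `Φ(m) = Δ + C·w^(d-1)·(w^(d+1) - (d+1)w + d)`. -/
lemma phi_decomp (d : ℕ) (hd : 2 ≤ d) (m : ℝ) (hm : 0 < m) :
    m ^ (((d:ℝ) - 1) / d)
      + ((1 / (d:ℝ)) * (((d:ℝ) + 1) / 2) ^ (((d:ℝ) + 1) / d)) * (1 - m) ^ 2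
    = (1 / (d:ℝ)) * (((d:ℝ) + 1) / 2) ^ (((d:ℝ) + 1) / d)
      + ((((d:ℝ)+1)/2) ^ ((1:ℝ)/d) / ((d:ℝ) * (((d:ℝ)+1)/2)))
        * ((((d:ℝ)+1)/2 * m) ^ ((1:ℝ)/d)) ^ (d-1)
        * (((((d:ℝ)+1)/2 * m) ^ ((1:ℝ)/d)) ^ (d+1)
            - ((d:ℝ)+1) * (((d:ℝ)+1)/2 * m) ^ ((1:ℝ)/d) + d) := by
  obtain ⟨e, rfl⟩ : ∃ e, d = e + 2 := ⟨d - 2, by omega⟩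
  set D : ℝ := ((e+2 : ℕ) : ℝ) with hDdef
  have hD : 0 < D := by positivity
  set t : ℝ := (D + 1)/2 with htdef
  have ht : 0 < t := by positivity
  have htm : 0 < t * m := by positivity
  set c : ℝ := t ^ ((1:ℝ)/D) with hcdef
  set w : ℝ := (t * m) ^ ((1:ℝ)/D) with hwdef
  have hw : 0 < w := rpow_pos_of_pos htm _
  have h1 : w ^ (e+2) = t * m := by
    rw [hwdef, rpow_root_pow _ htm.le, show (((e+2:ℕ)):ℝ)/D = 1 from div_self hD.ne',
      rpow_one]
  have h2 : m ^ ((D-1)/D) = c * w ^ (e+1) / t := by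
    have hwp : w ^ (e+1) = t ^ (((e+1:ℕ):ℝ)/D) * m ^ (((e+1:ℕ):ℝ)/D) := by
      rw [hwdef, rpow_root_pow _ htm.le, mul_rpow ht.le hm.le]
    have hcast : ((e+1:ℕ):ℝ) = D - 1 := by rw [hDdef]; push_cast; ring
    have hts : t ^ ((D-1)/D) = t / c := by
      have h : (D-1)/D = 1 - 1/D := by field_simp
      rw [h, rpow_sub ht, rpow_one, hcdef]
    rw [hwp, hcast, hts]
    field_simp
    exact (div_self (rpow_pos_of_pos ht _).ne').symm
  have h3 : t ^ ((D+1)/D) = t * c := by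
    have h : (D+1)/D = 1 + 1/D := by field_simp
    rw [h, rpow_add ht, rpow_one, hcdef]
  have key := alg_decomp e D t c w m hD ht h1 h2
  rw [show (2:ℝ)*t = D+1 by rw [htdef]; ring] at key
  simp only [show e+2-1 = e+1 from rfl, show e+2+1 = e+3 from rfl, h3]
  exact key

/-- Lower bound with equality case: for `m > 0`, `Δ ≤ Φ(m)` with equality iff `m = 2/(d+1)`. -/
lemma phi_lower (d : ℕ) (hd : 2 ≤ d) (m : ℝ) (hm : 0 < m) :
    (1 / (d:ℝ)) * (((d:ℝ) + 1) / 2) ^ (((d:ℝ) + 1) / d)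
      ≤ m ^ (((d:ℝ) - 1) / d)
        + ((1 / (d:ℝ)) * (((d:ℝ) + 1) / 2) ^ (((d:ℝ) + 1) / d)) * (1 - m) ^ 2
    ∧ (m ^ (((d:ℝ) - 1) / d)
        + ((1 / (d:ℝ)) * (((d:ℝ) + 1) / 2) ^ (((d:ℝ) + 1) / d)) * (1 - m) ^ 2
        = (1 / (d:ℝ)) * (((d:ℝ) + 1) / 2) ^ (((d:ℝ) + 1) / d) ↔ m = 2 / ((d:ℝ)+1)) := by
  rw [phi_decomp d hd m hm]
  set D := (d:ℝ) with hDdef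
  have hD : (0:ℝ) < D := by
    rw [hDdef]; exact_mod_cast Nat.pos_of_ne_zero (by omega)
  set t := (D+1)/2 with htdef
  have ht : (0:ℝ) < t := by rw [htdef]; linarith
  have htm : 0 < t * m := by positivity
  set C := t ^ ((1:ℝ)/D) / (D * t) with hCdef
  set w := (t*m)^((1:ℝ)/D) with hwdef
  have hw : 0 < w := rpow_pos_of_pos htm _
  have hC : 0 < C := div_pos (rpow_pos_of_pos ht _) (by positivity)
  have hwd : 0 < w ^ (d-1) := pow_pos hw _
  have h1 : w ^ d = t * m := by
    rw [hwdef, rpow_root_pow _ htm.le, ← hDdef, div_self hD.ne', rpow_one]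
  have hB0 : w ≠ 1 → 0 < w^(d+1) - (D+1)*w + D := by
    intro hw1
    have hb := strict_bernoulli hw.le hw1 (d+1) (by omega)
    push_cast at hb
    rw [← hDdef] at hb
    nlinarith
  have hwiff : w = 1 ↔ m = 2/(D+1) := by
    constructor
    · intro h
      have h2 : t * m = 1 := by rw [← h1, h, one_pow]
      rw [htdef] at h2
      field_simp at h2 ⊢
      linarith
    · intro h
      rw [hwdef, h, htdef]
      rw [show (D+1)/2 * (2/(D+1)) = 1 by field_simp]
      exact one_rpow _
  constructor
  · rcases eq_or_ne w 1 with h | h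
    · rw [h]; norm_num
    · nlinarith [mul_pos (mul_pos hC hwd) (hB0 h)]
  · constructor
    · intro heq
      by_contra hne
      have hw1 : w ≠ 1 := fun h => hne (hwiff.mp h)
      nlinarith [mul_pos (mul_pos hC hwd) (hB0 hw1)]
    · intro h
      rw [hwiff.mpr h]
      norm_num

lemma phi_zero_val (d : ℕ) (hd : 2 ≤ d) :
    (0:ℝ) ^ (((d:ℝ) - 1) / d)
      + ((1 / (d:ℝ)) * (((d:ℝ) + 1) / 2) ^ (((d:ℝ) + 1) / d)) * (1 - 0) ^ 2
    = (1 / (d:ℝ)) * (((d:ℝ) + 1) / 2) ^ (((d:ℝ) + 1) / d) := by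
  have hd2 : (2:ℝ) ≤ (d:ℝ) := by exact_mod_cast hd
  have hne : ((d:ℝ) - 1) / d ≠ 0 := by
    apply div_ne_zero <;> [linarith; linarith]
  rw [zero_rpow hne]
  ring

/-- At Δ = Δ_c, the set of global minimizers of Φ_Δ on [0,1] is exactly {0, 2/(d+1)}. -/
theorem critical_minimizers (d : ℕ) (hd : 2 ≤ d) :
    {l : ℝ | l ∈ Set.Icc (0:ℝ) 1 ∧ ∀ m ∈ Set.Icc (0:ℝ) 1,
        l ^ (((d:ℝ) - 1) / d)
            + ((1 / (d:ℝ)) * (((d:ℝ) + 1) / 2) ^ (((d:ℝ) + 1) / d)) * (1 - l) ^ 2 ≤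
          m ^ (((d:ℝ) - 1) / d)
            + ((1 / (d:ℝ)) * (((d:ℝ) + 1) / 2) ^ (((d:ℝ) + 1) / d)) * (1 - m) ^ 2}
      = {0, 2 / ((d:ℝ) + 1)} := by
  have hd2 : (2:ℝ) ≤ (d:ℝ) := by exact_mod_cast hd
  have hstar_pos : 0 < 2 / ((d:ℝ) + 1) := by positivity
  have hstar_le : 2 / ((d:ℝ) + 1) ≤ 1 := by
    rw [div_le_one (by linarith)]; linarith
  -- value at the interior minimizer equals Δ
  have hstar_val := (phi_lower d hd (2 / ((d:ℝ) + 1)) hstar_pos).2.mpr rfl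
  ext l
  simp only [Set.mem_setOf_eq, Set.mem_Icc, Set.mem_insert_iff, Set.mem_singleton_iff]
  constructor
  · rintro ⟨⟨hl0, hl1⟩, hmin⟩
    rcases hl0.eq_or_lt with h0 | h0
    · exact Or.inl h0.symm
    · right
      have h := hmin 0 ⟨le_refl 0, by norm_num⟩
      rw [phi_zero_val d hd] at h
      obtain ⟨hlow, hiff⟩ := phi_lower d hd l h0
      exact hiff.mp (le_antisymm h hlow)
  · intro h
    have hlval : l ^ (((d:ℝ) - 1) / d)
        + ((1 / (d:ℝ)) * (((d:ℝ) + 1) / 2) ^ (((d:ℝ) + 1) / d)) * (1 - l) ^ 2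
        = (1 / (d:ℝ)) * (((d:ℝ) + 1) / 2) ^ (((d:ℝ) + 1) / d) := by
      rcases h with rfl | rfl
      · exact phi_zero_val d hd
      · exact hstar_val
    have hlmem : l ∈ Set.Icc (0:ℝ) 1 := by
      rcases h with rfl | rfl
      · exact ⟨le_refl 0, by norm_num⟩
      · exact ⟨hstar_pos.le, hstar_le⟩
    refine ⟨hlmem, ?_⟩
    rintro m ⟨hm0, hm1⟩
    rw [hlval]
    rcases hm0.eq_or_lt with hm | hm
    · rw [← hm, phi_zero_val d hd]
    · exact (phi_lower d hd m hm).1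
end

section
/- Let d ≥ 2 and Δ > Δ_c = (1/d)((d+1)/2)^((d+1)/d). Then Φ_Δ(λ) = λ^((d-1)/d) + Δ(1-λ)² on [0,1] has a unique global minimizer λ_0, which is the maximal positive solution of (2d/(d-1)) Δ λ^(1/d)(1-λ) = 1, and λ_0 > 2/(d+1). -/
open Set Real

set_option maxHeartbeats 1000000 in
private lemma aux_supercrit (D Δ : ℝ) (hD : 2 ≤ D)
    (hsup : (1 / D) * ((D + 1) / 2) ^ ((D + 1) / D) < Δ) :
    ∃! l₀ : ℝ, l₀ ∈ Set.Icc (0:ℝ) 1 ∧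
      (∀ m ∈ Set.Icc (0:ℝ) 1, m ≠ l₀ →
        l₀ ^ ((D - 1) / D) + Δ * (1 - l₀) ^ 2 <
          m ^ ((D - 1) / D) + Δ * (1 - m) ^ 2) ∧
      (2 * D / (D - 1)) * Δ * l₀ ^ ((1:ℝ) / D) * (1 - l₀) = 1 ∧
      (∀ m : ℝ, 0 < m →
        (2 * D / (D - 1)) * Δ * m ^ ((1:ℝ) / D) * (1 - m) = 1 → m ≤ l₀) ∧
      2 / (D + 1) < l₀ := by
  have hD0 : (0:ℝ) < D := by linarith
  have hD1 : (0:ℝ) < D - 1 := by linarith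
  have hD10 : (0:ℝ) < D + 1 := by linarith
  have hΔ : 0 < Δ := lt_trans (by positivity) hsup
  set e : ℝ := (1:ℝ) / D with he_def
  set a : ℝ := (D - 1) / D with ha_def
  set C : ℝ := 2 * D / (D - 1) * Δ with hC_def
  have he : 0 < e := by rw [he_def]; positivity
  have ha : 0 < a := by rw [ha_def]; positivity
  have hC : 0 < C := by rw [hC_def]; positivity
  have hae0 : a - 1 + e = 0 := by rw [ha_def, he_def]; field_simp; ring
  have hae1 : a + e = 1 := by rw [ha_def, he_def]; field_simp; ring
  have haC : a * C = 2 * Δ := by rw [ha_def, hC_def]; field_simp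
  have hmulpow : ∀ x : ℝ, 0 < x → x ^ (a - 1) * x ^ e = 1 := by
    intro x hx
    rw [← Real.rpow_add hx, hae0, Real.rpow_zero]
  have hpow_a : ∀ x : ℝ, 0 < x → x ^ a * x ^ e = x := by
    intro x hx
    rw [← Real.rpow_add hx, hae1, Real.rpow_one]
  -- derivative of h
  have hderivh : ∀ x : ℝ, 0 < x →
      HasDerivAt (fun y : ℝ => y ^ e * (1 - y)) (x ^ (e - 1) * (e * (1 - x) - x)) x := by
    intro x hx
    have h1 : HasDerivAt (fun y : ℝ => y ^ e) (e * x ^ (e - 1)) x :=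
      Real.hasDerivAt_rpow_const (Or.inl hx.ne')
    have h2 : HasDerivAt (fun y : ℝ => 1 - y) (-1) x := by
      simpa using (hasDerivAt_id x).const_sub 1
    have h3 := h1.mul h2
    have hxe : x ^ (e - 1) * x = x ^ e := by
      rw [← Real.rpow_add_one hx.ne']; norm_num
    exact h3.congr_deriv (by rw [← hxe]; ring)
  -- derivative of Φ
  have hderivΦ : ∀ x : ℝ, 0 < x →
      HasDerivAt (fun y : ℝ => y ^ a + Δ * (1 - y) ^ 2)
        (a * x ^ (a - 1) - 2 * Δ * (1 - x)) x := by
    intro x hx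
    have h1 : HasDerivAt (fun y : ℝ => y ^ a) (a * x ^ (a - 1)) x :=
      Real.hasDerivAt_rpow_const (Or.inl hx.ne')
    have h2 : HasDerivAt (fun y : ℝ => 1 - y) (-1) x := by
      simpa using (hasDerivAt_id x).const_sub 1
    have h3 := (h2.pow 2).const_mul Δ
    have h4 := h1.add h3
    exact h4.congr_deriv (by push_cast; ring)
  have hphi_id : ∀ x : ℝ, 0 < x →
      a * x ^ (a - 1) - 2 * Δ * (1 - x) = a * x ^ (a - 1) * (1 - C * (x ^ e * (1 - x))) := by
    intro x hx
    have h1 := hmulpow x hx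
    linear_combination (a * C * (1 - x)) * h1 + (1 - x) * haC
  -- continuity
  have hconth : Continuous (fun y : ℝ => y ^ e * (1 - y)) :=
    (Real.continuous_rpow_const he.le).mul (continuous_const.sub continuous_id)
  have hcontΦ : Continuous (fun y : ℝ => y ^ a + Δ * (1 - y) ^ 2) :=
    (Real.continuous_rpow_const ha.le).add
      (continuous_const.mul ((continuous_const.sub continuous_id).pow 2))
  -- monotonicity of h
  have hmono : StrictMonoOn (fun y : ℝ => y ^ e * (1 - y)) (Icc 0 (1 / (D + 1))) := by
    apply strictMonoOn_of_deriv_pos (convex_Icc _ _) hconth.continuousOn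
    intro x hx
    rw [interior_Icc] at hx
    rw [(hderivh x hx.1).deriv]
    have hx1 : x * (D + 1) < 1 := (lt_div_iff₀ hD10).mp hx.2
    have h2 : 0 < e * (1 - x) - x := by
      have he1 : e * (1 - x) - x = (1 - x * (D + 1)) / D := by
        rw [he_def]; field_simp; ring
      rw [he1]
      exact div_pos (by linarith) hD0
    exact mul_pos (Real.rpow_pos_of_pos hx.1 _) h2
  have hanti : StrictAntiOn (fun y : ℝ => y ^ e * (1 - y)) (Icc (1 / (D + 1)) 1) := by
    apply strictAntiOn_of_deriv_neg (convex_Icc _ _) hconth.continuousOn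
    intro x hx
    rw [interior_Icc] at hx
    have hx0 : 0 < x := lt_trans (by positivity) hx.1
    rw [(hderivh x hx0).deriv]
    have hx1 : 1 < x * (D + 1) := (div_lt_iff₀ hD10).mp hx.1
    have h2 : e * (1 - x) - x < 0 := by
      have he1 : e * (1 - x) - x = (1 - x * (D + 1)) / D := by
        rw [he_def]; field_simp; ring
      rw [he1]
      exact div_neg_of_neg_of_pos (by linarith) hD0
    exact mul_neg_of_pos_of_neg (Real.rpow_pos_of_pos hx0 _) h2
  -- key bound from supercriticality
  set P : ℝ := ((D + 1) / 2) ^ e with hP_def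
  have hP : 0 < P := by rw [hP_def]; positivity
  have hsup2 : (D + 1) * P < 2 * D * Δ := by
    have h1 : (D + 1) / D = 1 + e := by rw [he_def]; field_simp
    have h2 : ((D + 1) / 2) ^ ((D + 1) / D) = ((D + 1) / 2) * P := by
      rw [h1, Real.rpow_add (by positivity), Real.rpow_one, hP_def]
    rw [h2] at hsup
    have h3 : (1 / D) * ((D + 1) / 2 * P) = (D + 1) * P / (2 * D) := by
      field_simp
    rw [h3, div_lt_iff₀ (by positivity)] at hsup
    nlinarith
  have hkey : 1 / C < (2 / (D + 1)) ^ e * (1 - 2 / (D + 1)) := by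
    have h21 : (2 / (D + 1) : ℝ) = ((D + 1) / 2)⁻¹ := by rw [inv_div]
    have h22 : (2 / (D + 1) : ℝ) ^ e = P⁻¹ := by
      rw [h21, Real.inv_rpow (by positivity), hP_def]
    rw [h22]
    have e1 : P⁻¹ * (1 - 2 / (D + 1)) = (D - 1) / ((D + 1) * P) := by
      field_simp
      ring
    have e2 : 1 / C = (D - 1) / (2 * D * Δ) := by
      rw [hC_def]; field_simp
    rw [e1, e2, div_lt_div_iff₀ (by positivity) (by positivity)]
    nlinarith
  have h2le1 : 2 / (D + 1) ≤ 1 := by rw [div_le_one hD10]; linarith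
  have h1le1 : 1 / (D + 1) ≤ 1 := by rw [div_le_one hD10]; linarith
  have h1lt2 : 1 / (D + 1) < 2 / (D + 1) := by
    rw [div_lt_div_iff₀ hD10 hD10]; nlinarith
  have h2pos : (0:ℝ) < 2 / (D + 1) := by positivity
  have h1pos : (0:ℝ) < 1 / (D + 1) := by positivity
  have hC1 : C * (1 / C) = 1 := by field_simp
  -- value at 0 and 1
  have hval0 : (fun y : ℝ => y ^ e * (1 - y)) 0 = 0 := by
    simp [Real.zero_rpow he.ne']
  have hval1 : (fun y : ℝ => y ^ e * (1 - y)) 1 = 0 := by simp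
  -- IVT for l₀ on [2/(D+1), 1]
  obtain ⟨l₀, hl₀mem, hl₀eq⟩ :
      ∃ x ∈ Icc (2 / (D + 1)) 1, (fun y : ℝ => y ^ e * (1 - y)) x = 1 / C := by
    have hsub := intermediate_value_Icc' h2le1 hconth.continuousOn
    have hmem : (1 / C : ℝ) ∈
        Icc ((fun y : ℝ => y ^ e * (1 - y)) 1) ((fun y : ℝ => y ^ e * (1 - y)) (2 / (D + 1))) := by
      rw [hval1]
      exact ⟨by positivity, hkey.le⟩
    obtain ⟨x, hx1, hx2⟩ := hsub hmem
    exact ⟨x, hx1, hx2⟩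
  replace hl₀eq : l₀ ^ e * (1 - l₀) = 1 / C := hl₀eq
  have hl₀gt : 2 / (D + 1) < l₀ := by
    rcases eq_or_lt_of_le hl₀mem.1 with h | h
    · exfalso; rw [← h] at hl₀eq; rw [hl₀eq] at hkey; linarith
    · exact h
  have hl₀pos : 0 < l₀ := lt_trans h2pos hl₀gt
  have hl₀lt1 : l₀ < 1 := by
    rcases eq_or_lt_of_le hl₀mem.2 with h | h
    · exfalso
      rw [h] at hl₀eq
      norm_num at hl₀eq
      have : (0:ℝ) < 1 / C := by positivity
      linarith
    · exact h
  have hl₀ge1 : 1 / (D + 1) ≤ l₀ := le_of_lt (lt_trans h1lt2 hl₀gt)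
  -- C-form equation at l₀
  have heql : C * (l₀ ^ e * (1 - l₀)) = 1 := by
    rw [hl₀eq]; exact hC1
  -- IVT for l₁ on [0, 1/(D+1)]
  have hmid : 1 / C < (fun y : ℝ => y ^ e * (1 - y)) (1 / (D + 1)) := by
    refine lt_trans hkey (hanti ⟨le_refl _, h1le1⟩ ⟨h1lt2.le, h2le1⟩ h1lt2)
  obtain ⟨l₁, hl₁mem, hl₁eq⟩ :
      ∃ x ∈ Icc (0:ℝ) (1 / (D + 1)), (fun y : ℝ => y ^ e * (1 - y)) x = 1 / C := by
    have hsub := intermediate_value_Icc h1pos.le hconth.continuousOn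
    have hmem : (1 / C : ℝ) ∈
        Icc ((fun y : ℝ => y ^ e * (1 - y)) 0) ((fun y : ℝ => y ^ e * (1 - y)) (1 / (D + 1))) := by
      rw [hval0]
      exact ⟨by positivity, hmid.le⟩
    obtain ⟨x, hx1, hx2⟩ := hsub hmem
    exact ⟨x, hx1, hx2⟩
  replace hl₁eq : l₁ ^ e * (1 - l₁) = 1 / C := hl₁eq
  replace hmid : 1 / C < (1 / (D + 1) : ℝ) ^ e * (1 - 1 / (D + 1)) := hmid
  have hl₁pos : 0 < l₁ := by
    rcases eq_or_lt_of_le hl₁mem.1 with h | h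
    · exfalso
      rw [← h] at hl₁eq
      rw [Real.zero_rpow he.ne'] at hl₁eq
      have : (0:ℝ) < 1 / C := by positivity
      linarith
    · exact h
  have hl₁lt : l₁ < 1 / (D + 1) := by
    rcases eq_or_lt_of_le hl₁mem.2 with h | h
    · exfalso; rw [h] at hl₁eq; rw [hl₁eq] at hmid; linarith
    · exact h
  have hl₁ltl₀ : l₁ < l₀ := lt_trans (lt_trans hl₁lt h1lt2) hl₀gt
  -- Φ strictly increasing on [0, l₁]
  have hΦmono1 : StrictMonoOn (fun y : ℝ => y ^ a + Δ * (1 - y) ^ 2) (Icc 0 l₁) := by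
    apply strictMonoOn_of_deriv_pos (convex_Icc _ _) hcontΦ.continuousOn
    intro x hx
    rw [interior_Icc] at hx
    rw [(hderivΦ x hx.1).deriv, hphi_id x hx.1]
    have hhx : x ^ e * (1 - x) < 1 / C := by
      have h5 : x ^ e * (1 - x) < l₁ ^ e * (1 - l₁) :=
        hmono ⟨hx.1.le, le_of_lt (lt_trans hx.2 hl₁lt)⟩ hl₁mem hx.2
      rw [hl₁eq] at h5
      exact h5
    have hCx : C * (x ^ e * (1 - x)) < 1 := by
      calc C * (x ^ e * (1 - x)) < C * (1 / C) := by
            exact mul_lt_mul_of_pos_left hhx hC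
        _ = 1 := hC1
    exact mul_pos (mul_pos ha (Real.rpow_pos_of_pos hx.1 _)) (by linarith)
  -- Φ strictly decreasing on [l₁, l₀]
  have hΦanti : StrictAntiOn (fun y : ℝ => y ^ a + Δ * (1 - y) ^ 2) (Icc l₁ l₀) := by
    apply strictAntiOn_of_deriv_neg (convex_Icc _ _) hcontΦ.continuousOn
    intro x hx
    rw [interior_Icc] at hx
    have hx0 : 0 < x := lt_trans hl₁pos hx.1
    rw [(hderivΦ x hx0).deriv, hphi_id x hx0]
    have hhx : 1 / C < x ^ e * (1 - x) := by
      rcases le_total x (1 / (D + 1)) with hc | hc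
      · have h5 : l₁ ^ e * (1 - l₁) < x ^ e * (1 - x) :=
          hmono ⟨hl₁pos.le, hl₁lt.le⟩ ⟨hx0.le, hc⟩ hx.1
        rw [hl₁eq] at h5
        exact h5
      · have h5 : l₀ ^ e * (1 - l₀) < x ^ e * (1 - x) :=
          hanti ⟨hc, le_of_lt (lt_trans hx.2 hl₀lt1)⟩ ⟨hl₀ge1, hl₀mem.2⟩ hx.2
        rw [hl₀eq] at h5
        exact h5
    have hCx : 1 < C * (x ^ e * (1 - x)) := by
      calc (1:ℝ) = C * (1 / C) := hC1.symm
        _ < C * (x ^ e * (1 - x)) := mul_lt_mul_of_pos_left hhx hC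
    exact mul_neg_of_pos_of_neg (mul_pos ha (Real.rpow_pos_of_pos hx0 _)) (by linarith)
  -- Φ strictly increasing on [l₀, 1]
  have hΦmono2 : StrictMonoOn (fun y : ℝ => y ^ a + Δ * (1 - y) ^ 2) (Icc l₀ 1) := by
    apply strictMonoOn_of_deriv_pos (convex_Icc _ _) hcontΦ.continuousOn
    intro x hx
    rw [interior_Icc] at hx
    have hx0 : 0 < x := lt_trans hl₀pos hx.1
    rw [(hderivΦ x hx0).deriv, hphi_id x hx0]
    have hhx : x ^ e * (1 - x) < 1 / C := by
      have h5 : x ^ e * (1 - x) < l₀ ^ e * (1 - l₀) :=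
        hanti ⟨hl₀ge1, hl₀mem.2⟩ ⟨le_trans hl₀ge1 hx.1.le, hx.2.le⟩ hx.1
      rw [hl₀eq] at h5
      exact h5
    have hCx : C * (x ^ e * (1 - x)) < 1 := by
      calc C * (x ^ e * (1 - x)) < C * (1 / C) := mul_lt_mul_of_pos_left hhx hC
        _ = 1 := hC1
    exact mul_pos (mul_pos ha (Real.rpow_pos_of_pos hx0 _)) (by linarith)
  -- l₀ ^ a in closed form
  have hl₀a : l₀ ^ a = C * l₀ * (1 - l₀) := by
    have h1 : l₀ ^ a * l₀ ^ e = l₀ := hpow_a l₀ hl₀pos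
    calc l₀ ^ a = l₀ ^ a * (C * (l₀ ^ e * (1 - l₀))) := by rw [heql]; ring
      _ = C * (1 - l₀) * (l₀ ^ a * l₀ ^ e) := by ring
      _ = C * l₀ * (1 - l₀) := by rw [h1]; ring
  -- Φ l₀ < Φ 0
  have hΦ0 : l₀ ^ a + Δ * (1 - l₀) ^ 2 < (0:ℝ) ^ a + Δ * (1 - 0) ^ 2 := by
    rw [Real.zero_rpow ha.ne', hl₀a, hC_def]
    have hG : 0 < (D + 1) * l₀ - 2 := by
      have h6 := hl₀gt
      rw [div_lt_iff₀ hD10] at h6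
      nlinarith
    have hid : Δ - (2 * D / (D - 1) * Δ * l₀ * (1 - l₀) + Δ * (1 - l₀) ^ 2)
        = Δ * l₀ * ((D + 1) * l₀ - 2) / (D - 1) := by
      field_simp
      ring
    have hpos : 0 < Δ * l₀ * ((D + 1) * l₀ - 2) / (D - 1) :=
      div_pos (mul_pos (mul_pos hΔ hl₀pos) hG) hD1
    nlinarith
  -- strict global minimality
  have hmin : ∀ m ∈ Icc (0:ℝ) 1, m ≠ l₀ →
      l₀ ^ a + Δ * (1 - l₀) ^ 2 < m ^ a + Δ * (1 - m) ^ 2 := by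
    intro m hm hne
    rcases lt_or_gt_of_ne hne with hlt | hgt
    · rcases lt_or_ge m l₁ with h1 | h1
      · have h2 : (0:ℝ) ^ a + Δ * (1 - 0) ^ 2 ≤ m ^ a + Δ * (1 - m) ^ 2 := by
          rcases eq_or_lt_of_le hm.1 with h0 | h0
          · rw [← h0]
          · exact le_of_lt (hΦmono1 ⟨le_refl _, hl₁pos.le⟩ ⟨hm.1, h1.le⟩ h0)
        linarith
      · exact hΦanti ⟨h1, hlt.le⟩ ⟨le_of_lt hl₁ltl₀, le_refl _⟩ hlt
    · exact hΦmono2 ⟨le_refl _, hl₀lt1.le⟩ ⟨hgt.le, hm.2⟩ hgt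
  -- maximality
  have hmax : ∀ m : ℝ, 0 < m → C * m ^ e * (1 - m) = 1 → m ≤ l₀ := by
    intro m hm heqm
    by_contra hcon
    push_neg at hcon
    have hm1 : m < 1 := by
      by_contra h1
      push_neg at h1
      have hle : C * m ^ e * (1 - m) ≤ 0 :=
        mul_nonpos_of_nonneg_of_nonpos
          (le_of_lt (mul_pos hC (Real.rpow_pos_of_pos hm _))) (by linarith)
      linarith
    have hlt : m ^ e * (1 - m) < l₀ ^ e * (1 - l₀) :=
      hanti ⟨hl₀ge1, hl₀mem.2⟩ ⟨le_trans hl₀ge1 hcon.le, hm1.le⟩ hcon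
    rw [hl₀eq] at hlt
    have hmeq : m ^ e * (1 - m) = 1 / C := by
      rw [eq_div_iff hC.ne']
      linear_combination heqm
    rw [hmeq] at hlt
    linarith
  -- assemble
  refine ⟨l₀, ⟨⟨hl₀pos.le, hl₀lt1.le⟩, hmin, by rw [mul_assoc]; exact heql, hmax, hl₀gt⟩, ?_⟩
  intro y hy
  obtain ⟨hymem, hymin, -, -, -⟩ := hy
  by_contra hne
  have h1 := hymin l₀ ⟨hl₀pos.le, hl₀lt1.le⟩ (fun h => hne h.symm)
  have h2 := hmin y hymem hne
  linarith

/-- For Δ > Δ_c, Φ_Δ has a unique global minimizer λ₀ on [0,1]; λ₀ is the maximal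
positive solution of (2d/(d-1)) Δ λ^(1/d)(1-λ) = 1, and λ₀ > 2/(d+1). -/
theorem supercritical_unique_minimizer (d : ℕ) (hd : 2 ≤ d) (Δ : ℝ)
    (hsup : (1 / (d:ℝ)) * (((d:ℝ) + 1) / 2) ^ (((d:ℝ) + 1) / d) < Δ) :
    ∃! l₀ : ℝ, l₀ ∈ Set.Icc (0:ℝ) 1 ∧
      (∀ m ∈ Set.Icc (0:ℝ) 1, m ≠ l₀ →
        l₀ ^ (((d:ℝ) - 1) / d) + Δ * (1 - l₀) ^ 2 <
          m ^ (((d:ℝ) - 1) / d) + Δ * (1 - m) ^ 2) ∧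
      (2 * d / ((d:ℝ) - 1)) * Δ * l₀ ^ ((1:ℝ) / d) * (1 - l₀) = 1 ∧
      (∀ m : ℝ, 0 < m →
        (2 * d / ((d:ℝ) - 1)) * Δ * m ^ ((1:ℝ) / d) * (1 - m) = 1 → m ≤ l₀) ∧
      2 / ((d:ℝ) + 1) < l₀ := by
  have hD : (2:ℝ) ≤ (d:ℝ) := by exact_mod_cast hd
  exact aux_supercrit (d:ℝ) Δ hD hsup
end

section
/- Let d ≥ 2 and let λ_+(Δ) denote the maximal solution in (0,1) of (2d/(d-1)) Δ λ^(1/d)(1-λ) = 1, for Δ > Δ_c = (1/d)((d+1)/2)^((d+1)/d). Then the derivative with respect to Δ of Φ_Δ(λ_+(Δ)) equals (1-λ_+(Δ))², which is strictly less than 1; in particular, Δ ↦ Φ_Δ(λ_+(Δ)) - Φ_Δ(0) is strictly decreasing in Δ on (Δ_c, ∞). -/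
open Real Set Filter Topology

/-- auxiliary function `g(x) = x^(1/D) (1-x)` -/
noncomputable def gfun (D : ℝ) (x : ℝ) : ℝ := x ^ ((1:ℝ)/D) * (1 - x)

lemma gfun_hasDerivAt {D x : ℝ} (hx : 0 < x) :
    HasDerivAt (gfun D)
      ((1/D) * x ^ ((1:ℝ)/D - 1) * (1 - x) + x ^ ((1:ℝ)/D) * (0 - 1)) x := by
  unfold gfun
  exact (Real.hasDerivAt_rpow_const (p := (1:ℝ)/D) (Or.inl hx.ne')).mul
    ((hasDerivAt_const x (1:ℝ)).sub (hasDerivAt_id x))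

lemma gfun_deriv_neg {D x : ℝ} (hD : 2 ≤ D) (hx : 1/(D+1) < x) (hx1 : x < 1) :
    (1/D) * x ^ ((1:ℝ)/D - 1) * (1 - x) + x ^ ((1:ℝ)/D) * (0 - 1) < 0 := by
  have hD0 : (0:ℝ) < D := by linarith
  have hx0 : 0 < x := lt_trans (by positivity) hx
  have hP : (0:ℝ) < x ^ ((1:ℝ)/D) := Real.rpow_pos_of_pos hx0 _
  have hsub : x ^ ((1:ℝ)/D - 1) = x ^ ((1:ℝ)/D) / x := by
    rw [Real.rpow_sub hx0, Real.rpow_one]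
  rw [hsub]
  have hxx : 1 - x < D * x := by nlinarith [(div_lt_iff₀ (by linarith : (0:ℝ) < D + 1)).mp hx]
  have h1 : (1/D) * (x ^ ((1:ℝ)/D) / x) * (1 - x)
      = x ^ ((1:ℝ)/D) * ((1 - x) / (D * x)) := by
    field_simp
  have h2 : (1 - x) / (D * x) < 1 := (div_lt_one (by positivity)).mpr hxx
  rw [h1]
  nlinarith [mul_lt_mul_of_pos_left h2 hP]

lemma gfun_strictAntiOn {D : ℝ} (hD : 2 ≤ D) :
    StrictAntiOn (gfun D) (Icc (1/(D+1)) 1) := by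
  have hls : (0:ℝ) < 1/(D+1) := by positivity
  apply strictAntiOn_of_deriv_neg (convex_Icc _ _)
  · intro x hx
    exact (gfun_hasDerivAt (lt_of_lt_of_le hls hx.1)).differentiableAt.continuousAt.continuousWithinAt
  · intro x hx
    rw [interior_Icc] at hx
    rw [(gfun_hasDerivAt (lt_trans hls hx.1)).deriv]
    exact gfun_deriv_neg hD hx.1 hx.2

/-- the key numeric inequality: `k < Δ_c · g(λ*)`. -/
lemma crit_lt {d : ℕ} (hd : 2 ≤ d) :
    ((d:ℝ)-1)/(2*(d:ℝ)) <
      (1/(d:ℝ) * (((d:ℝ)+1)/2) ^ (((d:ℝ)+1)/(d:ℝ))) * gfun (d:ℝ) (1/((d:ℝ)+1)) := by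
  set D : ℝ := (d:ℝ) with hDdef
  have hD : (2:ℝ) ≤ D := by rw [hDdef]; exact_mod_cast hd
  have hD0 : (0:ℝ) < D := by linarith
  have hD1 : (0:ℝ) < D - 1 := by linarith
  have hD10 : (0:ℝ) < D + 1 := by linarith
  -- compute g(λ*)
  have hgls : gfun D (1/(D+1)) = (D+1) ^ (-((1:ℝ)/D)) * (D/(D+1)) := by
    unfold gfun
    rw [Real.rpow_neg hD10.le]
    rw [show (1:ℝ)/(D+1) = (D+1)⁻¹ by ring, Real.inv_rpow hD10.le]
    congr 1
    field_simp
    ring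
  -- simplify the product
  have hprod : (1/D * ((D+1)/2) ^ ((D+1)/D)) * gfun D (1/(D+1))
      = 1 / (2 * 2 ^ ((1:ℝ)/D)) := by
    rw [hgls]
    have e1 : (D+1) ^ ((D+1)/D) * (D+1) ^ (-((1:ℝ)/D)) = D + 1 := by
      rw [← Real.rpow_add hD10, show (D+1)/D + -((1:ℝ)/D) = 1 by field_simp; ring, Real.rpow_one]
    have e2 : ((D+1)/2:ℝ) ^ ((D+1)/D) = (D+1) ^ ((D+1)/D) / (2 * 2 ^ ((1:ℝ)/D)) := by
      rw [Real.div_rpow hD10.le (by norm_num : (0:ℝ) ≤ 2),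
        show (D+1)/D = 1 + (1:ℝ)/D by field_simp, Real.rpow_add (by norm_num : (0:ℝ) < 2),
        Real.rpow_one]
    have h2pos : (0:ℝ) < (2:ℝ) ^ ((1:ℝ)/D) := Real.rpow_pos_of_pos (by norm_num) _
    have hBpos : (0:ℝ) < (D+1) ^ (-((1:ℝ)/D)) := Real.rpow_pos_of_pos hD10 _
    rw [e2]
    field_simp
    exact e1
  rw [hprod]
  -- need (D-1)/(2D) < 1/(2·2^{1/D}), i.e. (D-1)·2^{1/D} < D
  have hbern : (2:ℝ) < (D/(D-1)) ^ d := by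
    have h1 : D/(D-1) = 1 + 1/(D-1) := by field_simp; ring
    have hinv : (0:ℝ) ≤ 1/(D-1) := le_of_lt (div_pos one_pos hD1)
    have h2 : (1:ℝ) + (d:ℝ) * (1/(D-1)) ≤ (1 + 1/(D-1)) ^ d :=
      one_add_mul_le_pow (by linarith : (-2:ℝ) ≤ 1/(D-1)) d
    have h3 : (2:ℝ) < 1 + (d:ℝ) * (1/(D-1)) := by
      rw [hDdef]
      have : (1:ℝ) < D * (1/(D-1)) := by
        rw [mul_one_div, lt_div_iff₀ hD1]; linarith
      rw [← hDdef]; linarith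
    rw [h1]; linarith
  have hroot : (2:ℝ) ^ ((1:ℝ)/D) < D/(D-1) := by
    have h := Real.rpow_lt_rpow (by norm_num : (0:ℝ) ≤ 2) hbern (by positivity : (0:ℝ) < 1/D)
    rwa [← Real.rpow_natCast (D/(D-1)) d, ← Real.rpow_mul (by positivity),
      show (d:ℝ) * (1/D) = 1 by field_simp; exact hDdef.symm, Real.rpow_one] at h
  have h2pos : (0:ℝ) < (2:ℝ) ^ ((1:ℝ)/D) := Real.rpow_pos_of_pos (by norm_num) _
  have hkey : (D-1) * 2 ^ ((1:ℝ)/D) < D := by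
    have := (lt_div_iff₀ hD1).mp hroot
    nlinarith
  rw [div_lt_div_iff₀ (by positivity) (by positivity)]
  nlinarith

set_option maxHeartbeats 1000000 in
/-- For Δ > Δ_c, the derivative in Δ of Φ_Δ(λ₊(Δ)) equals (1-λ₊(Δ))² < 1; in
particular Δ ↦ Φ_Δ(λ₊(Δ)) - Φ_Δ(0) is strictly decreasing on (Δ_c, ∞). -/
theorem derivative_of_min_value (d : ℕ) (hd : 2 ≤ d) (lp : ℝ → ℝ)
    (hlp : ∀ Δ : ℝ, (1 / (d:ℝ)) * (((d:ℝ) + 1) / 2) ^ (((d:ℝ) + 1) / d) < Δ →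
      lp Δ ∈ Set.Ioo (0:ℝ) 1 ∧
      (2 * (d:ℝ) / ((d:ℝ) - 1)) * Δ * (lp Δ) ^ ((1:ℝ) / d) * (1 - lp Δ) = 1 ∧
      ∀ m ∈ Set.Ioo (0:ℝ) 1,
        (2 * (d:ℝ) / ((d:ℝ) - 1)) * Δ * m ^ ((1:ℝ) / d) * (1 - m) = 1 → m ≤ lp Δ) :
    (∀ Δ : ℝ, (1 / (d:ℝ)) * (((d:ℝ) + 1) / 2) ^ (((d:ℝ) + 1) / d) < Δ →
      HasDerivAt (fun t : ℝ => (lp t) ^ (((d:ℝ) - 1) / d) + t * (1 - lp t) ^ 2)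
        ((1 - lp Δ) ^ 2) Δ ∧ (1 - lp Δ) ^ 2 < 1) ∧
    StrictAntiOn
      (fun t : ℝ => ((lp t) ^ (((d:ℝ) - 1) / d) + t * (1 - lp t) ^ 2)
        - ((0:ℝ) ^ (((d:ℝ) - 1) / d) + t * (1 - (0:ℝ)) ^ 2))
      (Set.Ioi ((1 / (d:ℝ)) * (((d:ℝ) + 1) / 2) ^ (((d:ℝ) + 1) / d))) := by
  set D : ℝ := (d:ℝ) with hDdef
  have hD : (2:ℝ) ≤ D := by rw [hDdef]; exact_mod_cast hd
  have hD0 : (0:ℝ) < D := by linarith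
  have hD1 : (0:ℝ) < D - 1 := by linarith
  set Δc : ℝ := 1 / D * ((D+1)/2) ^ ((D+1)/D) with hΔcdef
  have hΔc0 : 0 < Δc := by positivity
  set ls : ℝ := 1/(D+1) with hlsdef
  have hls0 : 0 < ls := by positivity
  have hls1 : ls < 1 := by
    rw [hlsdef, div_lt_one (by linarith)]; linarith
  set k : ℝ := (D-1)/(2*D) with hkdef
  have hk0 : 0 < k := by positivity
  have hganti : StrictAntiOn (gfun D) (Icc ls 1) := gfun_strictAntiOn hD
  have hcrit : k < Δc * gfun D ls := crit_lt hd
  -- roots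
  have hroot : ∀ t, Δc < t → ls < lp t ∧ gfun D (lp t) = k / t := by
    intro t ht
    have ht0 : 0 < t := lt_trans hΔc0 ht
    obtain ⟨hmem, heq, hmax⟩ := hlp t ht
    have hgval : ∀ x : ℝ, (2 * D / (D - 1)) * t * x ^ ((1:ℝ)/D) * (1 - x) = 1 ↔
        gfun D x = k / t := by
      intro x
      unfold gfun
      rw [hkdef]
      constructor
      · intro h
        field_simp
        field_simp at h
        linarith
      · intro h
        field_simp at h
        field_simp
        linarith
    have hglp : gfun D (lp t) = k / t := (hgval _).mp heq
    refine ⟨?_, hglp⟩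
    -- find a root in (ls, 1) by IVT
    have hcont : ContinuousOn (gfun D) (Icc ls 1) := fun x hx =>
      (gfun_hasDerivAt (lt_of_lt_of_le hls0 hx.1)).differentiableAt.continuousAt.continuousWithinAt
    have hg1 : gfun D 1 = 0 := by unfold gfun; simp
    have hmemIoo : k / t ∈ Ioo (gfun D 1) (gfun D ls) := by
      constructor
      · rw [hg1]; positivity
      · calc k / t < k / Δc := by
              apply div_lt_div_of_pos_left hk0 hΔc0 ht
            _ ≤ gfun D ls := by
              rw [div_le_iff₀ hΔc0]
              nlinarith
    obtain ⟨r, hrIoo, hgr⟩ := intermediate_value_Ioo' hls1.le hcont hmemIoo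
    have hr01 : r ∈ Ioo (0:ℝ) 1 := ⟨lt_trans hls0 hrIoo.1, hrIoo.2⟩
    have := hmax r hr01 ((hgval r).mpr hgr)
    exact lt_of_lt_of_le hrIoo.1 this
  -- continuity of lp
  have hcontlp : ∀ Δ, Δc < Δ → ContinuousAt lp Δ := by
    intro Δ hΔ
    have hΔ0 : 0 < Δ := lt_trans hΔc0 hΔ
    obtain ⟨hmem, heq, _⟩ := hlp Δ hΔ
    obtain ⟨hlsL, hgL⟩ := hroot Δ hΔ
    rw [Metric.continuousAt_iff]
    intro ε hε
    set ε' : ℝ := min ε (min ((lp Δ - ls)/2) ((1 - lp Δ)/2)) with hε'def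
    have hε'0 : 0 < ε' := lt_min hε (lt_min (by linarith) (by linarith [hmem.2]))
    have hε'ε : ε' ≤ ε := min_le_left _ _
    have hε'a : ε' ≤ (lp Δ - ls)/2 := le_trans (min_le_right _ _) (min_le_left _ _)
    have hε'b : ε' ≤ (1 - lp Δ)/2 := le_trans (min_le_right _ _) (min_le_right _ _)
    have hmem1 : lp Δ - ε' ∈ Icc ls 1 := ⟨by linarith, by linarith [hmem.2]⟩
    have hmem2 : lp Δ + ε' ∈ Icc ls 1 := ⟨by linarith, by linarith [hmem.2]⟩
    have hmem0 : lp Δ ∈ Icc ls 1 := ⟨hlsL.le, hmem.2.le⟩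
    have ha : gfun D (lp Δ + ε') < k / Δ := by
      rw [← hgL]; exact hganti hmem0 hmem2 (by linarith)
    have hb : k / Δ < gfun D (lp Δ - ε') := by
      rw [← hgL]; exact hganti hmem1 hmem0 (by linarith)
    have hq : ContinuousAt (fun t : ℝ => k / t) Δ :=
      continuousAt_const.div continuousAt_id hΔ0.ne'
    have hev1 : ∀ᶠ t in 𝓝 Δ, k / t ∈ Ioo (gfun D (lp Δ + ε')) (gfun D (lp Δ - ε')) :=
      hq (Ioo_mem_nhds ha hb)
    have hev2 : ∀ᶠ t in 𝓝 Δ, Δc < t := eventually_gt_nhds hΔ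
    obtain ⟨δ, hδ0, hδ⟩ := Metric.eventually_nhds_iff.mp (hev1.and hev2)
    refine ⟨δ, hδ0, fun {x} hx => ?_⟩
    obtain ⟨⟨hxa, hxb⟩, hxc⟩ := hδ hx
    obtain ⟨hlsx, hgx⟩ := hroot x hxc
    obtain ⟨hmx, _, _⟩ := hlp x hxc
    have hmemx : lp x ∈ Icc ls 1 := ⟨hlsx.le, hmx.2.le⟩
    have hlow : lp Δ - ε' < lp x := by
      by_contra h
      push_neg at h
      have := hganti.antitoneOn hmemx hmem1 h
      rw [hgx] at this
      exact absurd this (not_le.mpr hxb)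
    have hhigh : lp x < lp Δ + ε' := by
      by_contra h
      push_neg at h
      have := hganti.antitoneOn hmem2 hmemx h
      rw [hgx] at this
      exact absurd this (not_le.mpr hxa)
    rw [Real.dist_eq, abs_lt]
    constructor <;> linarith
  -- differentiability of lp
  have hlpderiv : ∀ Δ, Δc < Δ → ∃ lp', HasDerivAt lp lp' Δ := by
    intro Δ hΔ
    have hΔ0 : 0 < Δ := lt_trans hΔc0 hΔ
    obtain ⟨hmem, heq, _⟩ := hlp Δ hΔ
    obtain ⟨hlsL, hgL⟩ := hroot Δ hΔ
    have hL0 : 0 < lp Δ := hmem.1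
    have hg' := gfun_hasDerivAt (D := D) hL0
    have hgd_neg := gfun_deriv_neg hD hlsL hmem.2
    have hgLpos : 0 < gfun D (lp Δ) := by rw [hgL]; positivity
    have hf : HasDerivAt (fun x => k / gfun D x)
        ((0 * gfun D (lp Δ) - k * ((1/D) * (lp Δ) ^ ((1:ℝ)/D - 1) * (1 - lp Δ)
          + (lp Δ) ^ ((1:ℝ)/D) * (0 - 1))) / (gfun D (lp Δ))^2) (lp Δ) :=
      (hasDerivAt_const (lp Δ) k).div hg' hgLpos.ne'
    have hf'ne : (0 * gfun D (lp Δ) - k * ((1/D) * (lp Δ) ^ ((1:ℝ)/D - 1) * (1 - lp Δ)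
        + (lp Δ) ^ ((1:ℝ)/D) * (0 - 1))) / (gfun D (lp Δ))^2 ≠ 0 := by
      apply ne_of_gt
      apply div_pos _ (by positivity)
      nlinarith
    have hfg : ∀ᶠ y in 𝓝 Δ, (fun x => k / gfun D x) (lp y) = y := by
      filter_upwards [Ioi_mem_nhds hΔ] with t ht
      obtain ⟨_, hgt⟩ := hroot t ht
      have ht0 : (0:ℝ) < t := lt_trans hΔc0 ht
      rw [hgt]
      field_simp
    exact ⟨_, HasDerivAt.of_local_left_inverse (hcontlp Δ hΔ) hf hf'ne hfg⟩
  -- main part 1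
  have main1 : ∀ Δ : ℝ, Δc < Δ →
      HasDerivAt (fun t : ℝ => (lp t) ^ ((D - 1) / D) + t * (1 - lp t) ^ 2)
        ((1 - lp Δ) ^ 2) Δ ∧ (1 - lp Δ) ^ 2 < 1 := by
    intro Δ hΔ
    obtain ⟨hmem, heq, _⟩ := hlp Δ hΔ
    obtain ⟨lp', hlp'⟩ := hlpderiv Δ hΔ
    have hL0 : 0 < lp Δ := hmem.1
    have hL1 : lp Δ < 1 := hmem.2
    have hP : (0:ℝ) < (lp Δ) ^ ((1:ℝ)/D) := Real.rpow_pos_of_pos hL0 _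
    have key : ((D-1)/D) * (lp Δ) ^ ((D-1)/D - 1) = 2 * Δ * (1 - lp Δ) := by
      have hexp : (D-1)/D - 1 = -((1:ℝ)/D) := by field_simp; ring
      rw [hexp, Real.rpow_neg hL0.le]
      field_simp at heq ⊢
      nlinarith [heq, hP]
    have hd1 : HasDerivAt (fun t => (lp t) ^ ((D-1)/D))
        (lp' * ((D-1)/D) * (lp Δ) ^ ((D-1)/D - 1)) Δ :=
      hlp'.rpow_const (Or.inl hL0.ne')
    have hd2 : HasDerivAt (fun t : ℝ => t * (1 - lp t) ^ 2)
        (1 * (1 - lp Δ) ^ 2 + Δ * ((2:ℕ) * (1 - lp Δ) ^ (2-1) * (0 - lp'))) Δ :=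
      (hasDerivAt_id Δ).mul (((hasDerivAt_const Δ (1:ℝ)).sub hlp').pow 2)
    constructor
    · have := hd1.add hd2
      refine this.congr_deriv ?_
      have key2 : lp' * ((D-1)/D) * (lp Δ) ^ ((D-1)/D - 1)
          = lp' * (2 * Δ * (1 - lp Δ)) := by
        rw [mul_assoc, mul_comm ((D-1)/D), ← mul_assoc] at key ⊢
        rw [mul_assoc lp', key]
      rw [key2]
      push_cast
      ring
    · nlinarith
  constructor
  · exact main1
  · -- strict antitonicity
    have hGderiv : ∀ t ∈ Ioi Δc,
        HasDerivAt (fun t : ℝ => ((lp t) ^ ((D - 1) / D) + t * (1 - lp t) ^ 2)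
          - ((0:ℝ) ^ ((D - 1) / D) + t * (1 - (0:ℝ)) ^ 2)) ((1 - lp t) ^ 2 - 1) t := by
      intro t ht
      have hF := (main1 t ht).1
      have h2 : HasDerivAt (fun s : ℝ => (0:ℝ) ^ ((D - 1) / D) + s * (1 - (0:ℝ)) ^ 2)
          ((1 - (0:ℝ)) ^ 2) t := by
        have h := ((hasDerivAt_id t).mul_const ((1 - (0:ℝ)) ^ 2)).const_add
          ((0:ℝ) ^ ((D - 1) / D))
        refine h.congr_deriv ?_
        norm_num
      have h3 := hF.sub h2
      refine h3.congr_deriv ?_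
      norm_num
    apply strictAntiOn_of_deriv_neg (convex_Ioi Δc)
    · intro t ht
      exact (hGderiv t ht).differentiableAt.continuousAt.continuousWithinAt
    · intro t ht
      rw [interior_Ioi] at ht
      rw [(hGderiv t ht).deriv]
      have := (main1 t ht).2
      linarith
end

section
/- For Δ = (1/2)(3/2)^(3/2) and Φ_Δ(λ) = √λ + Δ(1-λ)² on [0,1], the infimum of Φ_Δ over [0,1] equals Δ, and it is attained at both λ = 0 and λ = 2/3. -/
/-- For Δ = (1/2)(3/2)^(3/2), the infimum of Φ_Δ(λ) = √λ + Δ(1-λ)² over [0,1]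
equals Δ, attained at λ = 0 and λ = 2/3. -/
theorem critical_infimum_d2 :
    letI Δ : ℝ := (1 / 2) * (3 / 2 : ℝ) ^ ((3:ℝ) / 2)
    letI Φ : ℝ → ℝ := fun l => Real.sqrt l + Δ * (1 - l) ^ 2
    sInf (Φ '' Set.Icc (0:ℝ) 1) = Δ ∧ Φ 0 = Δ ∧ Φ (2 / 3) = Δ := by
  set Δ : ℝ := (1 / 2) * (3 / 2 : ℝ) ^ ((3:ℝ) / 2) with hΔdef
  set Φ : ℝ → ℝ := fun l => Real.sqrt l + Δ * (1 - l) ^ 2 with hΦdef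
  have hs : Real.sqrt (3/2) ^ 2 = 3/2 := Real.sq_sqrt (by norm_num)
  have hsnn : (0:ℝ) ≤ Real.sqrt (3/2) := Real.sqrt_nonneg _
  have hΔ : Δ = (3/4) * Real.sqrt (3/2) := by
    show (1/2 : ℝ) * (3/2:ℝ) ^ ((3:ℝ)/2) = _
    rw [show ((3:ℝ)/2) = (1:ℝ) + (1:ℝ)/2 by norm_num, Real.rpow_add (by norm_num),
      Real.rpow_one, ← Real.sqrt_eq_rpow]
    ring
  have hΔnn : 0 ≤ Δ := by rw [hΔ]; positivity
  have hΦ0 : Φ 0 = Δ := by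
    show Real.sqrt 0 + Δ * (1 - 0)^2 = Δ
    simp
  have hΦ23 : Φ (2/3) = Δ := by
    show Real.sqrt (2/3) + Δ * (1 - 2/3)^2 = Δ
    have ht : Real.sqrt (2/3) = (2/3) * Real.sqrt (3/2) := by
      rw [show (2/3:ℝ) = (2/3)^2 * (3/2) by norm_num, Real.sqrt_mul (by positivity),
        Real.sqrt_sq (by norm_num)]
      norm_num
    rw [ht, hΔ]; ring
  have hlb : ∀ y ∈ Φ '' Set.Icc (0:ℝ) 1, Δ ≤ y := by
    rintro y ⟨x, ⟨hx0, hx1⟩, rfl⟩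
    show Δ ≤ Real.sqrt x + Δ * (1 - x)^2
    have key : Δ * (x * (2 - x)) ≤ Real.sqrt x := by
      rcases eq_or_lt_of_le hx0 with h | h
      · simp [← h]
      · rw [show Δ * (x * (2-x)) ≤ Real.sqrt x ↔
            Δ * (x * (2-x)) ≤ Real.sqrt x from Iff.rfl]
        have hnn : 0 ≤ Δ * (x * (2 - x)) := by
          apply mul_nonneg hΔnn
          nlinarith
        rw [show Real.sqrt x = Real.sqrt x from rfl]
        have := (Real.le_sqrt hnn hx0).mpr
        apply this
        rw [hΔ]
        nlinarith [sq_nonneg (3*x - 2), mul_nonneg (mul_nonneg hx0 (sq_nonneg (3*x-2)))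
          (by linarith : (0:ℝ) ≤ 8 - 3*x)]
    nlinarith [key]
  constructor
  · refine le_antisymm (csInf_le ⟨Δ, hlb⟩ ⟨0, by norm_num, hΦ0⟩) (le_csInf ⟨Φ 0, ⟨0, by norm_num, rfl⟩⟩ hlb)
  · exact ⟨hΦ0, hΦ23⟩
end

section
/- Let a, b > 0 and consider f(λ) = a√λ + b(1-λ)² on [0,1]. If b/a < (1/2)(3/2)^(3/2), then f(λ) > f(0) for all λ ∈ (0,1]; i.e., 0 is the unique global minimizer. -/
/-- For a, b > 0 and f(λ) = a√λ + b(1-λ)² on [0,1]: if b/a < (1/2)(3/2)^(3/2),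
then f(λ) > f(0) for all λ ∈ (0,1], i.e. 0 is the unique global minimizer. -/
theorem subcritical_two_param (a b : ℝ) (ha : 0 < a) (hb : 0 < b)
    (h : b / a < (1 / 2) * (3 / 2 : ℝ) ^ ((3:ℝ) / 2)) :
    ∀ l ∈ Set.Ioc (0:ℝ) 1,
      a * Real.sqrt 0 + b * (1 - 0) ^ 2 < a * Real.sqrt l + b * (1 - l) ^ 2 := by
  intro l hl
  obtain ⟨hl0, hl1⟩ := hl
  set c : ℝ := (3 / 2 : ℝ) ^ ((3:ℝ) / 2) with hc
  have hcpos : 0 < c := Real.rpow_pos_of_pos (by norm_num) _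
  have hcsq : c ^ 2 = 27 / 8 := by
    have : c ^ (2:ℕ) = ((3/2:ℝ) ^ ((3:ℝ)/2)) ^ (2:ℕ) := rfl
    rw [this, ← Real.rpow_natCast ((3/2:ℝ) ^ ((3:ℝ)/2)) 2, ← Real.rpow_mul (by norm_num)]
    norm_num
  have hba : b < a * (c / 2) := by
    have := (div_lt_iff₀ ha).mp h
    nlinarith
  set s : ℝ := Real.sqrt l with hs
  have hspos : 0 < s := Real.sqrt_pos.mpr hl0
  have hssq : s ^ 2 = l := Real.sq_sqrt hl0.le
  have h2l : (0:ℝ) < 2 - l := by linarith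
  have key : l * (2 - l) ^ 2 ≤ 32 / 27 := by nlinarith [sq_nonneg (3 * l - 2)]
  have hcl : s * (2 - l) ≤ 2 / c := by
    have h1 : (s * (2 - l)) ^ 2 ≤ (2 / c) ^ 2 := by
      have : (2 / c) ^ 2 = 32 / 27 := by
        field_simp
        nlinarith
      rw [this]
      nlinarith
    have h2 : 0 ≤ s * (2 - l) := by positivity
    have h3 : 0 ≤ 2 / c := by positivity
    nlinarith
  have hfinal : b * s * (2 - l) < a := by
    have : b * (s * (2 - l)) ≤ b * (2 / c) := by
      exact mul_le_mul_of_nonneg_left hcl hb.le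
    have h4 : b * (2 / c) < a := by
      rw [mul_div_assoc', div_lt_iff₀ hcpos]
      nlinarith
    nlinarith
  have expand : a * s + b * (1 - l) ^ 2 - b = s * (a - b * s * (2 - l)) := by
    nlinarith [hssq]
  simp only [Real.sqrt_zero, mul_zero, zero_add]
  nlinarith [mul_pos hspos (sub_pos.mpr hfinal)]
end
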